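/- arXiv:2402.17173 — 2 statements merged into one kernel-verified Lean document; each statement's English description precedes it below -/
import Mathlib

section
/- In any run of the WPS algorithm, if agent h picks her last chore (her ℓ-th chore) at some round and agent i ends with k chores in total, then (ℓ-1)/w_h <= k/w_i. -/
open Finset

attribute [local instance] Classical.propDecidable

/-- The agent picked by the weighted picking sequence algorithm when the current
chore-counts are `s`: an agent minimizing `s i / w i`, ties broken in favour of
the smaller index. -/
noncomputable def wpsPick {n : ℕ} [NeZero n] (w : Fin n → ℝ) (s : Fin n → ℕ) : Fin n :=
  (Finset.univ.filter (fun i : Fin n => ∀ k : Fin n, (s i : ℝ) / w i ≤ (s k : ℝ) / w k)).min'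
    (by
      obtain ⟨i, -, hi⟩ := Finset.exists_min_image Finset.univ
        (fun i : Fin n => (s i : ℝ) / w i) ⟨0, Finset.mem_univ 0⟩
      exact ⟨i, Finset.mem_filter.2 ⟨Finset.mem_univ i, fun k => hi k (Finset.mem_univ k)⟩⟩)

/-- Number of chores held by each agent after `t` rounds of the WPS algorithm. -/
noncomputable def wpsCounts {n : ℕ} [NeZero n] (w : Fin n → ℝ) : ℕ → Fin n → ℕ
  | 0 => fun _ => 0
  | t + 1 => fun i => wpsCounts w t i + if wpsPick w (wpsCounts w t) = i then 1 else 0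

/-- The agent receiving the `t`-th chore (0-indexed, chores sorted non-increasingly
by payment) in the WPS algorithm. -/
noncomputable def wpsSeq {n : ℕ} [NeZero n] (w : Fin n → ℝ) (t : ℕ) : Fin n :=
  wpsPick w (wpsCounts w t)

/-- The bundle (set of rounds/chore-ranks) received by agent `i` when `m` chores are
allocated by the WPS algorithm. -/
noncomputable def wpsBundle {n : ℕ} [NeZero n] (w : Fin n → ℝ) (m : ℕ) (i : Fin n) :
    Finset ℕ :=
  (Finset.range m).filter (fun t => wpsSeq w t = i)

/-- `pm1 p S` is the payment of bundle `S` after removing its highest-paying chore,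
i.e. `min_{j ∈ S} p (S \ {j})`, with the convention `pm1 p ∅ = 0`. -/
noncomputable def pm1 {χ : Type*} [DecidableEq χ] (p : χ → ℝ) (S : Finset χ) : ℝ :=
  if h : S.Nonempty then S.inf' h (fun j => ∑ c ∈ S.erase j, p c) else 0


lemma wpsPick_min {n : ℕ} [NeZero n] (w : Fin n → ℝ) (s : Fin n → ℕ) (k : Fin n) :
    (s (wpsPick w s) : ℝ) / w (wpsPick w s) ≤ (s k : ℝ) / w k := by
  have hmem := Finset.min'_mem
    (Finset.univ.filter (fun i : Fin n => ∀ k : Fin n, (s i : ℝ) / w i ≤ (s k : ℝ) / w k))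
    (by
      obtain ⟨i, -, hi⟩ := Finset.exists_min_image Finset.univ
        (fun i : Fin n => (s i : ℝ) / w i) ⟨0, Finset.mem_univ 0⟩
      exact ⟨i, Finset.mem_filter.2 ⟨Finset.mem_univ i, fun k => hi k (Finset.mem_univ k)⟩⟩)
  exact (Finset.mem_filter.1 hmem).2 k

lemma wpsCounts_mono {n : ℕ} [NeZero n] (w : Fin n → ℝ) {a b : ℕ} (hab : a ≤ b) (i : Fin n) :
    wpsCounts w a i ≤ wpsCounts w b i := by
  induction b with
  | zero => simp [Nat.le_zero.1 hab]
  | succ b ih =>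
    rcases Nat.lt_succ_iff_lt_or_eq.1 (Nat.lt_succ_of_le hab) with hb | hb
    · calc wpsCounts w a i ≤ wpsCounts w b i := ih (Nat.lt_succ_iff.1 hb)
        _ ≤ _ := by simp [wpsCounts]
    · simp [hb]

/-- In any run of the WPS algorithm: if agent `h` picks her `ℓ`-th (and last) chore at
round `t` of an `m`-round run, and agent `i` ends up with `k` chores in total, then
`(ℓ - 1)/w_h ≤ k/w_i`. -/
theorem wps_last_pick_bound {n : ℕ} [NeZero n] (w : Fin n → ℝ) (hw : ∀ i, 0 < w i)
    (m t : ℕ) (ht : t < m) (h i : Fin n) (ℓ k : ℕ)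
    (hpick : wpsSeq w t = h)
    (hcur : wpsCounts w t h + 1 = ℓ)
    (hlast : wpsCounts w m h = ℓ)
    (hk : wpsCounts w m i = k) :
    ((ℓ : ℝ) - 1) / w h ≤ (k : ℝ) / w i := by
  subst hcur hk
  have h1 : (wpsCounts w t h : ℝ) / w h ≤ (wpsCounts w t i : ℝ) / w i := by
    have := wpsPick_min w (wpsCounts w t) i
    rwa [show wpsPick w (wpsCounts w t) = h from hpick] at this
  have h2 : (wpsCounts w t i : ℝ) / w i ≤ (wpsCounts w m i : ℝ) / w i := by
    gcongr
    · exact (hw i).le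
    · exact_mod_cast wpsCounts_mono w (le_of_lt ht) i
  have : ((wpsCounts w t h + 1 : ℕ) : ℝ) - 1 = (wpsCounts w t h : ℕ) := by
    push_cast; ring
  rw [this]
  exact le_trans h1 h2
end

section
/- For n agents with identical additive disutilities over a set of identical chores (all chores have equal disutility/payment 1), the following two procedures produce the same allocation: (a) the weighted picking sequence WPS(N, M) (each round the chore goes to the agent minimizing s_i/w_i, ties to smaller index); (b) algorithm A, which initially gives all m chores to agent 1 and, while the allocation is not wpEF1, transfers one chore from agent 1 to the agent k >= 2 minimizing |x_k|/w_k (ties to smaller index). -/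
open Finset

attribute [local instance] Classical.propDecidable

/-- The recipient of a transfer in algorithm `A`: among agents `k ≠ 0` (agent `0`
plays the role of "agent 1" holding all chores initially), the one minimizing
`x k / w k`, ties broken in favour of the smaller index. -/
noncomputable def aPick {n : ℕ} [NeZero n] (w : Fin n → ℝ) (x : Fin n → ℕ) : Fin n :=
  let s := Finset.univ.filter
    (fun i : Fin n => i ≠ 0 ∧ ∀ k : Fin n, k ≠ 0 → (x i : ℝ) / w i ≤ (x k : ℝ) / w k)
  if h : s.Nonempty then s.min' h else 0

/-- One transfer step of algorithm `A`: move a single (identical) chore from agent `0`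
to the agent `aPick w x`. -/
noncomputable def aStep {n : ℕ} [NeZero n] (w : Fin n → ℝ) (x : Fin n → ℕ) : Fin n → ℕ :=
  fun i => if i = 0 then x 0 - 1 else if aPick w x = i then x i + 1 else x i

/-- The chore counts after `t` transfer steps of algorithm `A`, started from the
allocation giving all `m` identical chores to agent `0`. -/
noncomputable def aIter {n : ℕ} [NeZero n] (w : Fin n → ℝ) (m : ℕ) : ℕ → Fin n → ℕ
  | 0 => fun i => if i = 0 then m else 0
  | t + 1 => aStep w (aIter w m t)

/-- wpEF1 for an allocation of identical chores of payment `1`, recorded by its counts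
vector `x`: here `p(x_i) = x i` and `p₋₁(x_i) = x i - 1` (or `0` if `x i = 0`). -/
def wpEF1Counts {n : ℕ} (w : Fin n → ℝ) (x : Fin n → ℕ) : Prop :=
  ∀ i h : Fin n, (if x i = 0 then (0 : ℝ) else (x i : ℝ) - 1) / w i ≤ (x h : ℝ) / w h

section Aux

variable {n : ℕ} [NeZero n] (w : Fin n → ℝ)

lemma wpsPick_mem (x : Fin n → ℕ) :
    wpsPick w x ∈ Finset.univ.filter
      (fun i : Fin n => ∀ k : Fin n, (x i : ℝ) / w i ≤ (x k : ℝ) / w k) :=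
  Finset.min'_mem _ _

lemma wpsPick_spec (x : Fin n → ℕ) (k : Fin n) :
    (x (wpsPick w x) : ℝ) / w (wpsPick w x) ≤ (x k : ℝ) / w k :=
  (Finset.mem_filter.1 (wpsPick_mem w x)).2 k

lemma wpsPick_le (x : Fin n → ℕ) (i : Fin n)
    (hi : ∀ k : Fin n, (x i : ℝ) / w i ≤ (x k : ℝ) / w k) : wpsPick w x ≤ i :=
  Finset.min'_le _ _ (Finset.mem_filter.2 ⟨Finset.mem_univ i, hi⟩)

lemma wpsPick_lt (x : Fin n → ℕ) (h : wpsPick w x ≠ 0) :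
    (x (wpsPick w x) : ℝ) / w (wpsPick w x) < (x 0 : ℝ) / w 0 := by
  by_contra hle
  push_neg at hle
  have h0 : ∀ k, (x 0 : ℝ) / w 0 ≤ (x k : ℝ) / w k := fun k =>
    le_trans hle (wpsPick_spec w x k)
  have hle0 : (wpsPick w x).val ≤ (0 : Fin n).val := wpsPick_le w x 0 h0
  have hv0 : (0 : Fin n).val = 0 := Fin.val_zero n
  exact h (Fin.ext (by omega))

lemma aPick_eq_wpsPick (x : Fin n → ℕ) (h : wpsPick w x ≠ 0) :
    aPick w x = wpsPick w x := by
  have hjmem : wpsPick w x ∈ Finset.univ.filter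
      (fun i : Fin n => i ≠ 0 ∧ ∀ k : Fin n, k ≠ 0 → (x i : ℝ) / w i ≤ (x k : ℝ) / w k) :=
    Finset.mem_filter.2 ⟨Finset.mem_univ _, h, fun k _ => wpsPick_spec w x k⟩
  have hne : (Finset.univ.filter
      (fun i : Fin n => i ≠ 0 ∧ ∀ k : Fin n, k ≠ 0 →
        (x i : ℝ) / w i ≤ (x k : ℝ) / w k)).Nonempty := ⟨_, hjmem⟩
  simp only [aPick]
  rw [dif_pos hne]
  refine le_antisymm (Finset.min'_le _ _ hjmem) (Finset.le_min' _ _ _ ?_)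
  intro i hi
  obtain ⟨-, hi0, hmin⟩ := Finset.mem_filter.1 hi
  refine wpsPick_le w x i (fun k => ?_)
  rcases eq_or_ne k 0 with rfl | hk
  · exact le_trans (hmin _ h) (wpsPick_spec w x 0)
  · exact hmin k hk

lemma aPick_congr (x y : Fin n → ℕ) (hxy : ∀ k : Fin n, k ≠ 0 → x k = y k) :
    aPick w x = aPick w y := by
  have hset : (Finset.univ.filter
      (fun i : Fin n => i ≠ 0 ∧ ∀ k : Fin n, k ≠ 0 → (x i : ℝ) / w i ≤ (x k : ℝ) / w k))
      = (Finset.univ.filter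
      (fun i : Fin n => i ≠ 0 ∧ ∀ k : Fin n, k ≠ 0 → (y i : ℝ) / w i ≤ (y k : ℝ) / w k)) := by
    apply Finset.filter_congr
    intro i _
    constructor
    · rintro ⟨hi0, hmin⟩
      exact ⟨hi0, fun k hk => by rw [← hxy i hi0, ← hxy k hk]; exact hmin k hk⟩
    · rintro ⟨hi0, hmin⟩
      exact ⟨hi0, fun k hk => by rw [hxy i hi0, hxy k hk]; exact hmin k hk⟩
  simp only [aPick, hset]

/-- Number of picks given to agents other than `0` in the first `t` WPS rounds. -/
noncomputable def nzCount : ℕ → ℕ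
  | 0 => 0
  | t + 1 => nzCount t + if wpsSeq w t = 0 then 0 else 1

lemma nzCount_add (t : ℕ) : wpsCounts w t 0 + nzCount w t = t := by
  induction t with
  | zero => simp [nzCount, wpsCounts]
  | succ t ih =>
    simp only [nzCount, wpsCounts, wpsSeq]
    by_cases h : wpsPick w (wpsCounts w t) = 0 <;> simp [h] <;> omega

lemma nzCount_mono : Monotone (nzCount w) := by
  apply monotone_nat_of_le_succ
  intro t
  simp only [nzCount]
  omega

lemma nzCount_succ_le (t : ℕ) : nzCount w (t + 1) ≤ nzCount w t + 1 := by
  simp only [nzCount]; split <;> omega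

lemma wpsCounts_mono_s8 (i : Fin n) : Monotone (fun t => wpsCounts w t i) := by
  apply monotone_nat_of_le_succ
  intro t
  simp only [wpsCounts]
  omega

lemma aIter_zero' (m t : ℕ) : aIter w m t 0 = m - t := by
  induction t with
  | zero => simp [aIter]
  | succ t ih =>
    show aStep w (aIter w m t) 0 = m - (t + 1)
    simp only [aStep, if_true]
    rw [ih]
    omega

/-- The simulation lemma: for agents other than `0`, the WPS counts after `t` rounds
agree with the `A`-iterates after `nzCount w t` transfers. -/
lemma sim (m t : ℕ) : ∀ k : Fin n, k ≠ 0 →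
    wpsCounts w t k = aIter w m (nzCount w t) k := by
  induction t with
  | zero => intro k hk; simp [nzCount, wpsCounts, aIter, hk]
  | succ t ih =>
    intro k hk
    by_cases h : wpsPick w (wpsCounts w t) = 0
    · have h1 : nzCount w (t + 1) = nzCount w t := by
        simp [nzCount, wpsSeq, h]
      have hne : wpsPick w (wpsCounts w t) ≠ k := by
        rw [h]; intro hh; exact hk hh.symm
      have h2 : wpsCounts w (t + 1) k = wpsCounts w t k := by
        simp only [wpsCounts]
        rw [if_neg hne, Nat.add_zero]
      rw [h1, h2, ih k hk]
    · have hap : aPick w (aIter w m (nzCount w t)) = wpsPick w (wpsCounts w t) := by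
        rw [aPick_congr w (aIter w m (nzCount w t)) (wpsCounts w t)
          (fun j hj => (ih j hj).symm)]
        exact aPick_eq_wpsPick w _ h
      have h1 : nzCount w (t + 1) = nzCount w t + 1 := by
        simp [nzCount, wpsSeq, h]
      have h2 : aIter w m (nzCount w t + 1) k
          = aIter w m (nzCount w t) k + if wpsPick w (wpsCounts w t) = k then 1 else 0 := by
        show aStep w (aIter w m (nzCount w t)) k = _
        simp only [aStep, if_neg hk, hap]
        split <;> rfl
      rw [h1, h2, ← ih k hk]
      simp only [wpsCounts]

lemma wps_invariant (hw : ∀ i, 0 < w i) (t : ℕ) : ∀ i k : Fin n, 0 < wpsCounts w t i →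
    ((wpsCounts w t i : ℝ) - 1) / w i ≤ (wpsCounts w t k : ℝ) / w k := by
  induction t with
  | zero => intro i k hi; simp [wpsCounts] at hi
  | succ t ih =>
    intro i k hi
    have hmono : ∀ j, (wpsCounts w t j : ℝ) / w j ≤ (wpsCounts w (t + 1) j : ℝ) / w j := by
      intro j
      have : (wpsCounts w t j : ℝ) ≤ (wpsCounts w (t + 1) j : ℝ) := by
        exact_mod_cast wpsCounts_mono_s8 w j (Nat.le_succ t)
      exact div_le_div_of_nonneg_right this (hw j).le
    by_cases h : wpsPick w (wpsCounts w t) = i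
    · have hcount : wpsCounts w (t + 1) i = wpsCounts w t i + 1 := by
        simp [wpsCounts, h]
      have h1 : ((wpsCounts w (t + 1) i : ℝ) - 1) = (wpsCounts w t i : ℝ) := by
        rw [hcount]; push_cast; ring
      rw [h1]
      refine le_trans ?_ (hmono k)
      have := wpsPick_spec w (wpsCounts w t) k
      rwa [h] at this
    · have hcount : wpsCounts w (t + 1) i = wpsCounts w t i := by
        simp [wpsCounts, h]
      rw [hcount]
      exact le_trans (ih i k (hcount ▸ hi)) (hmono k)

end Aux

/-- For `n ≥ 2` agents with positive weights and `m` identical chores (payment `1`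
each), algorithm `A` — start with all chores at agent `0` and, while the allocation is
not wpEF1, transfer one chore from agent `0` to the agent `k ≠ 0` minimizing
`x k / w k` (ties to smaller index) — halts, and its output (the first wpEF1 iterate)
is exactly the allocation produced by the weighted picking sequence `WPS(N, M)`. -/
theorem algA_eq_wps {n : ℕ} [NeZero n] (hn : 2 ≤ n) (w : Fin n → ℝ) (hw : ∀ i, 0 < w i)
    (m : ℕ) :
    (∃ t, wpEF1Counts w (aIter w m t))
    ∧ ∀ t, wpEF1Counts w (aIter w m t) → (∀ s < t, ¬ wpEF1Counts w (aIter w m s)) →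
        ∀ i : Fin n, aIter w m t i = wpsCounts w m i := by
  have hadd : wpsCounts w m 0 + nzCount w m = m := nzCount_add w m
  set T := nzCount w m with hT
  have hTm : T ≤ m := by omega
  have haT : ∀ i, aIter w m T i = wpsCounts w m i := by
    intro i
    rcases eq_or_ne i 0 with rfl | hi
    · rw [aIter_zero']; omega
    · exact (sim w m m i hi).symm
  have hwpEF1_T : wpEF1Counts w (aIter w m T) := by
    intro i h
    rw [haT i, haT h]
    by_cases h0 : wpsCounts w m i = 0
    · rw [if_pos h0, zero_div]
      exact div_nonneg (Nat.cast_nonneg _) (hw h).le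
    · rw [if_neg h0]
      exact wps_invariant w hw m i h (Nat.pos_of_ne_zero h0)
  have hnot : ∀ t < T, ¬ wpEF1Counts w (aIter w m t) := by
    intro t ht hEF
    have hm : 1 ≤ m := by omega
    have hex : ∃ τ, t + 1 ≤ nzCount w (τ + 1) := by
      refine ⟨m - 1, ?_⟩
      rw [Nat.sub_add_cancel hm]
      omega
    set τ := Nat.find hex with hτdef
    have hfind : t + 1 ≤ nzCount w (τ + 1) := Nat.find_spec hex
    have hτle : nzCount w τ ≤ t := by
      rcases Nat.eq_zero_or_pos τ with h0 | h0
      · rw [h0]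
        show nzCount w 0 ≤ t
        simp [nzCount]
      · obtain ⟨τ', hτ'⟩ := Nat.exists_eq_succ_of_ne_zero h0.ne'
        have h2 := Nat.find_min hex (show τ' < τ by omega)
        have h3 : nzCount w (τ' + 1) ≤ t := by omega
        rw [hτ']
        exact h3
    have hstep := nzCount_succ_le w τ
    have hnzτ : nzCount w τ = t := by omega
    have hpick : wpsPick w (wpsCounts w τ) ≠ 0 := by
      intro h0
      have : nzCount w (τ + 1) = nzCount w τ := by
        simp [nzCount, wpsSeq, h0]
      omega
    have hτlt : τ < m := by
      by_contra hle
      push_neg at hle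
      have := nzCount_mono w hle
      omega
    set j := wpsPick w (wpsCounts w τ) with hjdef
    have hjlt : (wpsCounts w τ j : ℝ) / w j < (wpsCounts w τ 0 : ℝ) / w 0 :=
      wpsPick_lt w _ hpick
    have hsim : wpsCounts w τ j = aIter w m t j := by
      rw [← hnzτ]
      exact sim w m τ j hpick
    have h0mono : wpsCounts w τ 0 ≤ wpsCounts w m 0 := wpsCounts_mono_s8 w 0 hτlt.le
    have hEF0 := hEF 0 j
    have hx0 : aIter w m t 0 = m - t := aIter_zero' w m t
    have hx0ne : aIter w m t 0 ≠ 0 := by rw [hx0]; omega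
    rw [if_neg hx0ne, hx0] at hEF0
    have hcast : ((m - t : ℕ) : ℝ) = (m : ℝ) - t := by
      rw [Nat.cast_sub (by omega)]
    have hD : (wpsCounts w τ 0 : ℝ) ≤ ((m - t : ℕ) : ℝ) - 1 := by
      rw [hcast]
      have : wpsCounts w τ 0 + t + 1 ≤ m := by omega
      have h2 : (wpsCounts w τ 0 : ℝ) + t + 1 ≤ m := by exact_mod_cast this
      linarith
    have hD2 : (wpsCounts w τ 0 : ℝ) / w 0 ≤ (((m - t : ℕ) : ℝ) - 1) / w 0 :=
      div_le_div_of_nonneg_right hD (hw 0).le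
    rw [← hsim] at hEF0
    linarith
  refine ⟨⟨T, hwpEF1_T⟩, ?_⟩
  intro t hEFt hmin i
  have htT : t = T := by
    rcases lt_trichotomy t T with h | h | h
    · exact absurd hEFt (hnot t h)
    · exact h
    · exact absurd hwpEF1_T (hmin T h)
  rw [htT]
  exact haT i
end
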